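/- Let A be a symmetric positive definite n×n real matrix, β > 0, set C = (1/β) A and Λ = (1/√β) A, and let B be any n×n real matrix. Define S = C + B A⁻¹ Bᵀ and Ŝ = (B + Λ) A⁻¹ (B + Λ)ᵀ. Then Ŝ − S = (1/√β)(B + Bᵀ); consequently, if B + Bᵀ is positive semidefinite and Ŝ is invertible, then every eigenvalue of Ŝ⁻¹ S (over ℂ) is real and lies in [1/2, 1]. -/

import Mathlib

/-!
With `s = √β`, expanding the products gives `Ŝ = S + s⁻¹ (B + Bᵀ)` and
`2S - Ŝ = (B - s⁻¹ A) A⁻¹ (B - s⁻¹ A)ᵀ`, so `S ≤ Ŝ ≤ 2S` in the Loewner order once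
`B + Bᵀ ⪰ 0`. If `Ŝ⁻¹ S v = z v` with `v ≠ 0`, then `v* S v = z · v* Ŝ v` with `v* Ŝ v > 0`,
and the two Loewner inequalities put `z` on the real segment `[1/2, 1]`.
-/

open Matrix ComplexOrder

theorem Complex.nonneg_of_mul_nonneg_left {a b : ℂ} (h : 0 ≤ a * b) (hb : 0 < b) : 0 ≤ a := by
  simpa [hb.ne'] using mul_nonneg h (RCLike.inv_pos_of_pos hb).le

namespace Matrix

variable {ι : Type*} [Fintype ι] [DecidableEq ι]

theorem add_smul_mul_nonsing_inv_mul_transpose_add_smul {R : Type*} [CommRing R]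
    {A : Matrix ι ι R} (hA : IsUnit A.det) (hAt : Aᵀ = A) (B : Matrix ι ι R) (t : R) :
    (B + t • A) * A⁻¹ * (B + t • A)ᵀ = B * A⁻¹ * Bᵀ + t • (B + Bᵀ) + (t * t) • A := by
  have hBA : B * A⁻¹ * A = B := by rw [Matrix.mul_assoc, nonsing_inv_mul _ hA, Matrix.mul_one]
  have hAB : A * A⁻¹ * Bᵀ = Bᵀ := by rw [mul_nonsing_inv _ hA, Matrix.one_mul]
  have hAA : A * A⁻¹ * A = A := by rw [mul_nonsing_inv _ hA, Matrix.one_mul]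
  simp only [transpose_add, transpose_smul, hAt, Matrix.add_mul, Matrix.mul_add, Matrix.smul_mul,
    Matrix.mul_smul, smul_smul, smul_add, hBA, hAB, hAA]
  abel

theorem map_nonsing_inv {R S : Type*} [CommRing R] [CommRing S] (f : R →+* S)
    {M : Matrix ι ι R} (hM : IsUnit M.det) : M⁻¹.map f = (M.map f)⁻¹ :=
  (inv_eq_left_inv <| by
    rw [← Matrix.map_mul, nonsing_inv_mul _ hM, Matrix.map_one f f.map_zero f.map_one]).symm

open scoped MatrixOrder in
theorem PosSemidef.map_ofReal {𝕜 : Type*} [RCLike 𝕜] {M : Matrix ι ι ℝ} (hM : M.PosSemidef) :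
    (M.map (algebraMap ℝ 𝕜)).PosSemidef := by
  obtain ⟨B, rfl⟩ := CStarAlgebra.nonneg_iff_eq_star_mul_self.mp hM.nonneg
  rw [star_eq_conjTranspose, Matrix.map_mul, conjTranspose_map _ fun _ => by simp]
  exact posSemidef_conjTranspose_mul_self _

theorem PosDef.map_ofReal {𝕜 : Type*} [RCLike 𝕜] {M : Matrix ι ι ℝ} (hM : M.PosDef) :
    (M.map (algebraMap ℝ 𝕜)).PosDef :=
  hM.posSemidef.map_ofReal.posDef_iff_isUnit.mpr <| hM.isUnit.map (algebraMap ℝ 𝕜).mapMatrix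

theorem spectrum_nonsing_inv_mul_subset_Icc {H S : Matrix ι ι ℂ} (hH : H.PosDef) {a b : ℝ}
    (ha : (S - (a : ℂ) • H).PosSemidef) (hb : ((b : ℂ) • H - S).PosSemidef) :
    spectrum ℂ (H⁻¹ * S) ⊆ Set.Icc (a : ℂ) b := by
  intro z hz
  rw [← spectrum_toLin', ← Module.End.hasEigenvalue_iff_mem_spectrum] at hz
  obtain ⟨v, hv⟩ := hz.exists_hasEigenvector
  have hSv : S *ᵥ v = z • H *ᵥ v := by
    have := congrArg (H *ᵥ ·) hv.apply_eq_smul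
    rwa [toLin'_apply, mulVec_mulVec, ← Matrix.mul_assoc,
      mul_nonsing_inv _ ((isUnit_iff_isUnit_det H).mp hH.isUnit), Matrix.one_mul,
      mulVec_smul] at this
  have hHv : 0 < star v ⬝ᵥ H *ᵥ v := hH.dotProduct_mulVec_pos hv.2
  have quad (c : ℝ) : star v ⬝ᵥ (S - (c : ℂ) • H) *ᵥ v = (z - c) * (star v ⬝ᵥ H *ᵥ v) := by
    rw [sub_mulVec, smul_mulVec, hSv, dotProduct_sub, dotProduct_smul, dotProduct_smul,
      smul_eq_mul, smul_eq_mul, sub_mul]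
  refine ⟨sub_nonneg.mp <| Complex.nonneg_of_mul_nonneg_left ?_ hHv,
    sub_nonneg.mp <| Complex.nonneg_of_mul_nonneg_left ?_ hHv⟩
  · rw [← quad]
    exact ha.dotProduct_mulVec_nonneg v
  · rw [← neg_sub, neg_mul, ← quad, ← dotProduct_neg, ← neg_mulVec, neg_sub]
    exact hb.dotProduct_mulVec_nonneg v

theorem spectrum_map_nonsing_inv_mul_subset_Icc {H S : Matrix ι ι ℝ} (hH : H.PosDef) {a b : ℝ}
    (ha : (S - a • H).PosSemidef) (hb : (b • H - S).PosSemidef) :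
    spectrum ℂ ((H⁻¹ * S).map (algebraMap ℝ ℂ)) ⊆ Set.Icc (a : ℂ) b := by
  set f := algebraMap ℝ ℂ
  have ha' : (S - a • H).map f = S.map f - (a : ℂ) • H.map f := by ext; simp [f]
  have hb' : (b • H - S).map f = (b : ℂ) • H.map f - S.map f := by ext; simp [f]
  rw [Matrix.map_mul, map_nonsing_inv _ ((isUnit_iff_isUnit_det H).mp hH.isUnit)]
  exact spectrum_nonsing_inv_mul_subset_Icc hH.map_ofReal (ha' ▸ ha.map_ofReal)
    (hb' ▸ hb.map_ofReal)

end Matrix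

/-- For `C = (1/β) A` and `Lam = (1/√β) A` with `A` symmetric positive
definite and `β > 0`, one has `Shat - S = (1/√β)(B + Bᵀ)`; consequently,
if `B + Bᵀ` is positive semidefinite and `Shat` is invertible, then every
eigenvalue of `Shat⁻¹ S` (over `ℂ`) is real and lies in `[1/2, 1]`. -/
theorem matching_strategy_beta_scaled (n : ℕ)
    (A : Matrix (Fin n) (Fin n) ℝ) (hA : A.PosDef)
    (β : ℝ) (hβ : 0 < β)
    (C Lam B : Matrix (Fin n) (Fin n) ℝ)
    (hC : C = β⁻¹ • A) (hLam : Lam = (Real.sqrt β)⁻¹ • A)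
    (S Shat : Matrix (Fin n) (Fin n) ℝ)
    (hS : S = C + B * A⁻¹ * Bᵀ)
    (hShat : Shat = (B + Lam) * A⁻¹ * (B + Lam)ᵀ) :
    Shat - S = (Real.sqrt β)⁻¹ • (B + Bᵀ) ∧
      ((B + Bᵀ).PosSemidef → IsUnit Shat →
        ∀ z ∈ spectrum ℂ ((Shat⁻¹ * S).map (algebraMap ℝ ℂ)),
          z.im = 0 ∧ (1 / 2 : ℝ) ≤ z.re ∧ z.re ≤ 1) := by
  set s := Real.sqrt β
  have hs : 0 < s := Real.sqrt_pos.mpr hβ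
  have hss : s⁻¹ * s⁻¹ = β⁻¹ := by rw [← mul_inv, Real.mul_self_sqrt hβ.le]
  have hAdet : IsUnit A.det := (isUnit_iff_isUnit_det A).mp hA.isUnit
  have hAt : Aᵀ = A := hA.isHermitian
  have hconj (M : Matrix (Fin n) (Fin n) ℝ) : (M * A⁻¹ * Mᵀ).PosSemidef :=
    hA.inv.posSemidef.mul_mul_conjTranspose_same M
  have hShat_eq : Shat = S + s⁻¹ • (B + Bᵀ) := by
    rw [hShat, hLam, add_smul_mul_nonsing_inv_mul_transpose_add_smul hAdet hAt, hS, hC, hss]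
    abel
  have hdiff : Shat - S = s⁻¹ • (B + Bᵀ) := by rw [hShat_eq, add_sub_cancel_left]
  refine ⟨hdiff, fun hB _ z hz => ?_⟩
  have hSpd : S.PosDef := hS ▸ hC ▸ (hA.smul (inv_pos.2 hβ)).add_posSemidef (hconj B)
  have hShatpd : Shat.PosDef := hShat_eq ▸ hSpd.add_posSemidef (hB.smul (inv_pos.2 hs).le)
  have hupper : ((1 : ℝ) • Shat - S).PosSemidef := by
    rw [one_smul, hdiff]
    exact hB.smul (inv_pos.2 hs).le
  have hlower : (S - (1 / 2 : ℝ) • Shat).PosSemidef := by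
    have : S - (1 / 2 : ℝ) • Shat =
        (1 / 2 : ℝ) • ((B + (-s⁻¹) • A) * A⁻¹ * (B + (-s⁻¹) • A)ᵀ) := by
      rw [add_smul_mul_nonsing_inv_mul_transpose_add_smul hAdet hAt, hShat_eq, hS, hC,
        neg_mul_neg, hss]
      module
    rw [this]
    exact (hconj _).smul (by norm_num)
  obtain ⟨hlo, hhi⟩ := spectrum_map_nonsing_inv_mul_subset_Icc hShatpd hlower hupper hz
  simp only [Complex.le_def, Complex.ofReal_re, Complex.ofReal_im] at hlo hhi
  exact ⟨hhi.2, hlo.1, hhi.1⟩
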